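/- arXiv:1407.8308 — 5 statements merged into one kernel-verified Lean document; each statement's English description precedes it below -/
import Mathlib

section
/- For β ∈ (0,1], the expression 3Γ(2β+1)² − 3Γ(β+1)²Γ(2β+1) − Γ(β+1)Γ(3β+1) equals zero if and only if β = 1. -/
open Filter Finset Real Nat

private lemma poly2 (j β : ℝ) (hj : 0 ≤ j) (h0 : 0 ≤ β) (h1 : β ≤ 1) :
    (β + 1 + j)^3 * (3*β + 1 + j) * (3 + j)^3 ≤ (2*β + 1 + j)^3 * (2 + j)^3 * (4 + j) := by
  have hm0 : (0:ℝ) ≤ 1 + j := by linarith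
  have hS : (0:ℝ) ≤ 2*(1+j)^4*(1+β+β^2) + 3*(1+j)^3*(1+5*β+5*β^2+β^3)
      + 6*(1+j)^2*(3*β+7*β^2+3*β^3) + 36*(1+j)*(β^2+β^3) + 24*β^3 := by
    have h2 := pow_nonneg h0 2
    have h3 := pow_nonneg h0 3
    have m2 := pow_nonneg hm0 2
    have m3 := pow_nonneg hm0 3
    have m4 := pow_nonneg hm0 4
    nlinarith [mul_nonneg m4 h0, mul_nonneg m4 h2, mul_nonneg m3 h0, mul_nonneg m3 h2,
      mul_nonneg m3 h3, mul_nonneg m2 h0, mul_nonneg m2 h2, mul_nonneg m2 h3,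
      mul_nonneg hm0 h2, mul_nonneg hm0 h3]
  nlinarith [mul_nonneg (sub_nonneg.2 h1) hS]

private lemma collapse7 {N F : ℝ} (hN : 0 < N) (x y z X Y Z : ℝ)
    (h : x+(x+(x+(y+(z+(z+z))))) = X+(X+(X+(Y+(Y+(Y+Z)))))) :
    (N^x*F)^3 * (N^y*F) * (N^z*F)^3 = (N^X*F)^3 * (N^Y*F)^3 * (N^Z*F) := by
  have hmul : ∀ a b : ℝ, N^a * N^b = N^(a+b) := fun a b => (Real.rpow_add hN a b).symm
  calc (N^x*F)^3 * (N^y*F) * (N^z*F)^3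
      = N^x*(N^x*(N^x*(N^y*(N^z*(N^z*N^z))))) * F^7 := by ring
    _ = N^(x+(x+(x+(y+(z+(z+z)))))) * F^7 := by simp only [hmul]
    _ = N^(X+(X+(X+(Y+(Y+(Y+Z)))))) * F^7 := by rw [h]
    _ = N^X*(N^X*(N^X*(N^Y*(N^Y*(N^Y*N^Z))))) * F^7 := by simp only [hmul]
    _ = (N^X*F)^3 * (N^Y*F)^3 * (N^Z*F) := by ring

private lemma stepW (β : ℝ) (h0 : 0 ≤ β) (h1 : β ≤ 1) (n : ℕ) (hn : 1 ≤ n) :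
    Real.GammaSeq (2*β+1) n ^3 * Real.GammaSeq 2 n ^3 * Real.GammaSeq 4 n
      ≤ Real.GammaSeq (β+1) n ^3 * Real.GammaSeq (3*β+1) n * Real.GammaSeq 3 n ^3 := by
  have hN : (0:ℝ) < (n:ℝ) := by exact_mod_cast hn
  have hF : (0:ℝ) < (n ! : ℝ) := by exact_mod_cast n.factorial_pos
  have hP : ∀ s : ℝ, 0 < s → 0 < ∏ j ∈ Finset.range (n+1), (s + (j:ℝ)) := by
    intro s hs
    exact Finset.prod_pos fun j _ => by positivity
  have gsmul : ∀ s : ℝ, 0 < s →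
      Real.GammaSeq s n * (∏ j ∈ Finset.range (n+1), (s+(j:ℝ))) = (n:ℝ)^s * (n ! : ℝ) := by
    intro s hs
    rw [Real.GammaSeq]
    exact div_mul_cancel₀ _ (hP s hs).ne'
  have hb1 : (0:ℝ) < β+1 := by linarith
  have hb2 : (0:ℝ) < 2*β+1 := by linarith
  have hb3 : (0:ℝ) < 3*β+1 := by linarith
  set P : ℝ → ℝ := fun s => ∏ j ∈ Finset.range (n+1), (s + (j:ℝ)) with hPdef
  have hprod : P (β+1) ^3 * P (3*β+1) * P 3 ^3 ≤ P (2*β+1) ^3 * P 2 ^3 * P 4 := by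
    rw [hPdef]
    simp only [← Finset.prod_pow, ← Finset.prod_mul_distrib]
    refine Finset.prod_le_prod (fun j _ => ?_) (fun j _ => ?_)
    · have hj : (0:ℝ) ≤ (j:ℝ) := j.cast_nonneg
      positivity
    · exact poly2 (j:ℝ) β j.cast_nonneg h0 h1
  have hgs : ∀ s : ℝ, 0 < s → 0 < Real.GammaSeq s n := by
    intro s hs
    rw [Real.GammaSeq]
    positivity
  have hL : (Real.GammaSeq (β+1) n ^3 * Real.GammaSeq (3*β+1) n * Real.GammaSeq 3 n ^3)
      * (P (β+1) ^3 * P (3*β+1) * P 3 ^3)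
      = ((n:ℝ)^(β+1)*(n ! : ℝ))^3 * ((n:ℝ)^(3*β+1)*(n ! : ℝ)) * ((n:ℝ)^(3:ℝ)*(n ! : ℝ))^3 := by
    rw [← gsmul (β+1) hb1, ← gsmul (3*β+1) hb3, ← gsmul 3 (by norm_num)]
    ring
  have hR : (Real.GammaSeq (2*β+1) n ^3 * Real.GammaSeq 2 n ^3 * Real.GammaSeq 4 n)
      * (P (2*β+1) ^3 * P 2 ^3 * P 4)
      = ((n:ℝ)^(2*β+1)*(n ! : ℝ))^3 * ((n:ℝ)^(2:ℝ)*(n ! : ℝ))^3 * ((n:ℝ)^(4:ℝ)*(n ! : ℝ)) := by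
    rw [← gsmul (2*β+1) hb2, ← gsmul 2 (by norm_num), ← gsmul 4 (by norm_num)]
    ring
  have hEq : (Real.GammaSeq (β+1) n ^3 * Real.GammaSeq (3*β+1) n * Real.GammaSeq 3 n ^3)
      * (P (β+1) ^3 * P (3*β+1) * P 3 ^3)
      = (Real.GammaSeq (2*β+1) n ^3 * Real.GammaSeq 2 n ^3 * Real.GammaSeq 4 n)
      * (P (2*β+1) ^3 * P 2 ^3 * P 4) := by
    rw [hL, hR]
    exact collapse7 hN (β+1) (3*β+1) 3 (2*β+1) 2 4 (by ring)
  have hDL : 0 < P (β+1) ^3 * P (3*β+1) * P 3 ^3 := by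
    have := hP (β+1) hb1; have := hP (3*β+1) hb3; have := hP 3 (by norm_num)
    positivity
  have hRpos : 0 ≤ Real.GammaSeq (2*β+1) n ^3 * Real.GammaSeq 2 n ^3 * Real.GammaSeq 4 n := by
    have := hgs (2*β+1) hb2; have := hgs 2 (by norm_num); have := hgs 4 (by norm_num)
    positivity
  have key : (Real.GammaSeq (2*β+1) n ^3 * Real.GammaSeq 2 n ^3 * Real.GammaSeq 4 n)
      * (P (β+1) ^3 * P (3*β+1) * P 3 ^3)
      ≤ (Real.GammaSeq (β+1) n ^3 * Real.GammaSeq (3*β+1) n * Real.GammaSeq 3 n ^3)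
      * (P (β+1) ^3 * P (3*β+1) * P 3 ^3) := by
    rw [hEq]
    exact mul_le_mul_of_nonneg_left hprod hRpos
  exact le_of_mul_le_mul_right key hDL


private lemma poly1' (j β : ℝ) (hj : 0 ≤ j) (h0 : 0 ≤ β) (h1 : β ≤ 1) :
    (β + 1 + j + 1)^2 * (3 + j + 1) ≤ (2*β + 1 + j + 1) * (2 + j + 1)^2 := by
  nlinarith [mul_nonneg (sub_nonneg.2 h1) (by nlinarith : (0:ℝ) ≤ (j+2)*(1+β) + 2*β)]

private lemma collapse3 {N F : ℝ} (hN : 0 < N) (x y X Y : ℝ)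
    (h : x+(x+y) = X+(Y+Y)) :
    (N^x*F)^2 * (N^y*F) = (N^X*F) * (N^Y*F)^2 := by
  have hmul : ∀ a b : ℝ, N^a * N^b = N^(a+b) := fun a b => (Real.rpow_add hN a b).symm
  calc (N^x*F)^2 * (N^y*F)
      = N^x*(N^x*N^y) * F^3 := by ring
    _ = N^(x+(x+y)) * F^3 := by simp only [hmul]
    _ = N^(X+(Y+Y)) * F^3 := by rw [h]
    _ = N^X*(N^Y*N^Y) * F^3 := by simp only [hmul]
    _ = (N^X*F) * (N^Y*F)^2 := by ring

private lemma stepU (β : ℝ) (h0 : 0 ≤ β) (h1 : β ≤ 1) (n : ℕ) (hn : 1 ≤ n) :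
    (4*(1+2*β)/(3*(1+β)^2)) * (Real.GammaSeq (2*β+1) n * Real.GammaSeq 2 n ^2)
      ≤ Real.GammaSeq (β+1) n ^2 * Real.GammaSeq 3 n := by
  have hN : (0:ℝ) < (n:ℝ) := by exact_mod_cast hn
  have hP : ∀ s : ℝ, 0 < s → 0 < ∏ j ∈ Finset.range (n+1), (s + (j:ℝ)) := by
    intro s hs
    exact Finset.prod_pos fun j _ => by positivity
  have gsmul : ∀ s : ℝ, 0 < s →
      Real.GammaSeq s n * (∏ j ∈ Finset.range (n+1), (s+(j:ℝ))) = (n:ℝ)^s * (n.factorial : ℝ) := by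
    intro s hs
    rw [Real.GammaSeq]
    exact div_mul_cancel₀ _ (hP s hs).ne'
  have hb1 : (0:ℝ) < β+1 := by linarith
  have hb2 : (0:ℝ) < 2*β+1 := by linarith
  set P : ℝ → ℝ := fun s => ∏ j ∈ Finset.range (n+1), (s + (j:ℝ)) with hPdef
  have hsucc : ∀ s : ℝ, P s = (∏ j ∈ Finset.range n, (s + (j:ℝ) + 1)) * s := by
    intro s
    rw [hPdef]
    show (∏ j ∈ Finset.range (n+1), (s + (j:ℝ))) = _
    rw [Finset.prod_range_succ']
    push_cast
    rw [add_zero]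
    exact congrArg (· * s) (Finset.prod_congr rfl fun j _ => by ring)
  have hQ : (∏ j ∈ Finset.range n, (β+1+(j:ℝ)+1))^2 * (∏ j ∈ Finset.range n, ((3:ℝ)+(j:ℝ)+1))
      ≤ (∏ j ∈ Finset.range n, (2*β+1+(j:ℝ)+1)) * (∏ j ∈ Finset.range n, ((2:ℝ)+(j:ℝ)+1))^2 := by
    simp only [← Finset.prod_pow, ← Finset.prod_mul_distrib]
    refine Finset.prod_le_prod (fun j _ => ?_) (fun j _ => ?_)
    · have hj : (0:ℝ) ≤ (j:ℝ) := j.cast_nonneg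
      positivity
    · exact poly1' (j:ℝ) β j.cast_nonneg h0 h1
  have hprod : (4*(1+2*β)/(3*(1+β)^2)) * (P (β+1) ^2 * P 3) ≤ P (2*β+1) * P 2 ^2 := by
    rw [hsucc (β+1), hsucc 3, hsucc (2*β+1), hsucc 2]
    have e1 : (4*(1+2*β)/(3*(1+β)^2)) *
        (((∏ j ∈ Finset.range n, (β+1+(j:ℝ)+1)) * (β+1))^2
          * ((∏ j ∈ Finset.range n, ((3:ℝ)+(j:ℝ)+1)) * 3))
        = ((∏ j ∈ Finset.range n, (β+1+(j:ℝ)+1))^2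
            * (∏ j ∈ Finset.range n, ((3:ℝ)+(j:ℝ)+1))) * (4*(1+2*β)) := by
      field_simp
      ring
    rw [e1]
    have e2 : ((∏ j ∈ Finset.range n, (2*β+1+(j:ℝ)+1)) * (2*β+1))
        * (((∏ j ∈ Finset.range n, ((2:ℝ)+(j:ℝ)+1)) * 2)^2)
        = ((∏ j ∈ Finset.range n, (2*β+1+(j:ℝ)+1))
            * (∏ j ∈ Finset.range n, ((2:ℝ)+(j:ℝ)+1))^2) * (4*(1+2*β)) := by ring
    rw [e2]
    exact mul_le_mul_of_nonneg_right hQ (by linarith)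
  have hgs : ∀ s : ℝ, 0 < s → 0 < Real.GammaSeq s n := by
    intro s hs
    rw [Real.GammaSeq]
    have : (0:ℝ) < (n.factorial : ℝ) := by exact_mod_cast n.factorial_pos
    positivity
  have hEq : (Real.GammaSeq (β+1) n ^2 * Real.GammaSeq 3 n) * (P (β+1) ^2 * P 3)
      = (Real.GammaSeq (2*β+1) n * Real.GammaSeq 2 n ^2) * (P (2*β+1) * P 2 ^2) := by
    have l1 : (Real.GammaSeq (β+1) n ^2 * Real.GammaSeq 3 n) * (P (β+1) ^2 * P 3)
        = ((n:ℝ)^(β+1)*(n.factorial : ℝ))^2 * ((n:ℝ)^(3:ℝ)*(n.factorial : ℝ)) := by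
      rw [← gsmul (β+1) hb1, ← gsmul 3 (by norm_num)]
      ring
    have l2 : (Real.GammaSeq (2*β+1) n * Real.GammaSeq 2 n ^2) * (P (2*β+1) * P 2 ^2)
        = ((n:ℝ)^(2*β+1)*(n.factorial : ℝ)) * ((n:ℝ)^(2:ℝ)*(n.factorial : ℝ))^2 := by
      rw [← gsmul (2*β+1) hb2, ← gsmul 2 (by norm_num)]
      ring
    rw [l1, l2]
    exact collapse3 hN (β+1) 3 (2*β+1) 2 (by ring)
  have hDL : 0 < P (β+1) ^2 * P 3 := by
    have := hP (β+1) hb1; have := hP 3 (by norm_num)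
    positivity
  have hRpos : 0 ≤ Real.GammaSeq (2*β+1) n * Real.GammaSeq 2 n ^2 := by
    have := hgs (2*β+1) hb2; have := hgs 2 (by norm_num)
    positivity
  have key : ((4*(1+2*β)/(3*(1+β)^2)) * (Real.GammaSeq (2*β+1) n * Real.GammaSeq 2 n ^2))
      * (P (β+1) ^2 * P 3)
      ≤ (Real.GammaSeq (β+1) n ^2 * Real.GammaSeq 3 n) * (P (β+1) ^2 * P 3) := by
    rw [hEq]
    calc ((4*(1+2*β)/(3*(1+β)^2)) * (Real.GammaSeq (2*β+1) n * Real.GammaSeq 2 n ^2))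
        * (P (β+1) ^2 * P 3)
        = (Real.GammaSeq (2*β+1) n * Real.GammaSeq 2 n ^2)
          * ((4*(1+2*β)/(3*(1+β)^2)) * (P (β+1) ^2 * P 3)) := by ring
      _ ≤ (Real.GammaSeq (2*β+1) n * Real.GammaSeq 2 n ^2) * (P (2*β+1) * P 2 ^2) :=
          mul_le_mul_of_nonneg_left hprod hRpos
  exact le_of_mul_le_mul_right key hDL

private lemma gamma2 : Real.Gamma (2:ℝ) = 1 := by
  rw [show (2:ℝ) = ((1:ℕ):ℝ)+1 by norm_num, Real.Gamma_nat_eq_factorial]; norm_num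

private lemma gamma3 : Real.Gamma (3:ℝ) = 2 := by
  rw [show (3:ℝ) = ((2:ℕ):ℝ)+1 by norm_num, Real.Gamma_nat_eq_factorial]; norm_num

private lemma gamma4 : Real.Gamma (4:ℝ) = 6 := by
  rw [show (4:ℝ) = ((3:ℕ):ℝ)+1 by norm_num, Real.Gamma_nat_eq_factorial]; norm_num [Nat.factorial]

private lemma Wbound (β : ℝ) (h0 : 0 ≤ β) (h1 : β ≤ 1) :
    6 * Real.Gamma (2*β+1)^3 ≤ 8 * Real.Gamma (β+1)^3 * Real.Gamma (3*β+1) := by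
  have tL : Tendsto (fun n => Real.GammaSeq (β+1) n ^3 * Real.GammaSeq (3*β+1) n
      * Real.GammaSeq 3 n ^3) atTop
      (nhds (Real.Gamma (β+1)^3 * Real.Gamma (3*β+1) * Real.Gamma 3 ^3)) :=
    (((Real.GammaSeq_tendsto_Gamma (β+1)).pow 3).mul
      (Real.GammaSeq_tendsto_Gamma (3*β+1))).mul ((Real.GammaSeq_tendsto_Gamma 3).pow 3)
  have tR : Tendsto (fun n => Real.GammaSeq (2*β+1) n ^3 * Real.GammaSeq 2 n ^3
      * Real.GammaSeq 4 n) atTop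
      (nhds (Real.Gamma (2*β+1)^3 * Real.Gamma 2 ^3 * Real.Gamma 4)) :=
    (((Real.GammaSeq_tendsto_Gamma (2*β+1)).pow 3).mul
      ((Real.GammaSeq_tendsto_Gamma 2).pow 3)).mul (Real.GammaSeq_tendsto_Gamma 4)
  have hle := le_of_tendsto_of_tendsto tR tL
    (eventually_atTop.2 ⟨1, fun n hn => stepW β h0 h1 n hn⟩)
  rw [gamma2, gamma3, gamma4] at hle
  nlinarith [hle]

private lemma Ubound (β : ℝ) (h0 : 0 ≤ β) (h1 : β ≤ 1) :
    (4*(1+2*β)/(3*(1+β)^2)) * Real.Gamma (2*β+1) ≤ 2 * Real.Gamma (β+1)^2 := by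
  have tL : Tendsto (fun n => Real.GammaSeq (β+1) n ^2 * Real.GammaSeq 3 n) atTop
      (nhds (Real.Gamma (β+1)^2 * Real.Gamma 3)) :=
    ((Real.GammaSeq_tendsto_Gamma (β+1)).pow 2).mul (Real.GammaSeq_tendsto_Gamma 3)
  have tR : Tendsto (fun n => (4*(1+2*β)/(3*(1+β)^2))
      * (Real.GammaSeq (2*β+1) n * Real.GammaSeq 2 n ^2)) atTop
      (nhds ((4*(1+2*β)/(3*(1+β)^2)) * (Real.Gamma (2*β+1) * Real.Gamma 2 ^2))) :=
    ((Real.GammaSeq_tendsto_Gamma (2*β+1)).mul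
      ((Real.GammaSeq_tendsto_Gamma 2).pow 2)).const_mul _
  have hle := le_of_tendsto_of_tendsto tR tL
    (eventually_atTop.2 ⟨1, fun n hn => stepU β h0 h1 n hn⟩)
  rw [gamma2, gamma3] at hle
  nlinarith [hle]

/-- For `β ∈ (0,1]`, `3Γ(2β+1)² − 3Γ(β+1)²Γ(2β+1) − Γ(β+1)Γ(3β+1) = 0` iff `β = 1`. -/
theorem gamma_combination_eq_zero_iff (β : ℝ) (hβ : 0 < β) (hβ1 : β ≤ 1) :
    3 * Real.Gamma (2 * β + 1) ^ 2 -
      3 * Real.Gamma (β + 1) ^ 2 * Real.Gamma (2 * β + 1) -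
      Real.Gamma (β + 1) * Real.Gamma (3 * β + 1) = 0 ↔ β = 1 := by
  constructor
  · intro h
    by_contra hne
    have hlt : β < 1 := lt_of_le_of_ne hβ1 hne
    set a := Real.Gamma (β+1) with ha
    set b := Real.Gamma (2*β+1) with hb
    set c := Real.Gamma (3*β+1) with hc
    have hap : 0 < a := Real.Gamma_pos_of_pos (by linarith)
    have hbp : 0 < b := Real.Gamma_pos_of_pos (by linarith)
    have hcp : 0 < c := Real.Gamma_pos_of_pos (by linarith)
    have hW : 6 * b^3 ≤ 8 * a^3 * c := Wbound β hβ.le hβ1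
    -- strict: b < 2 a^2
    have hU : (4*(1+2*β)/(3*(1+β)^2)) * b ≤ 2 * a^2 := Ubound β hβ.le hβ1
    have hc0 : 1 < 4*(1+2*β)/(3*(1+β)^2) := by
      rw [lt_div_iff₀ (by positivity)]
      nlinarith [mul_pos (sub_pos.2 hlt) (by linarith : (0:ℝ) < 1+3*β)]
    have hblt : b < 2 * a^2 := by
      calc b = 1 * b := (one_mul b).symm
        _ < (4*(1+2*β)/(3*(1+β)^2)) * b := by
            exact mul_lt_mul_of_pos_right hc0 hbp
        _ ≤ 2 * a^2 := hU
    -- contradiction with h : 3b² − 3a²b − ac = 0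
    nlinarith [mul_pos hbp (mul_pos hap hap), sq_nonneg (b - 2*a^2),
      mul_pos hbp (mul_pos (sub_pos.2 hblt) (sub_pos.2 hblt)),
      mul_pos (mul_pos hap hap) hap]
  · rintro rfl
    norm_num [Nat.factorial]
end

section
/- Let μ_β² be the probability measure on ℝ² with mixed moments M(2n_1,2n_2) = ((2n_1)!(2n_2)!(n_1+n_2)!)/(2^{n_1+n_2} n_1! n_2! Γ(β(n_1+n_2)+1)) and zero whenever an exponent is odd. Then ∫_{ℝ²} H_4^β(x) H_2^β(y) dμ_β²(x,y) = A(β)·(3Γ(2β+1)² − 3Γ(β+1)²Γ(2β+1) − Γ(β+1)Γ(3β+1)) where A(β) = 24/(Γ(2β+1)Γ(3β+1)(6Γ(β+1)² − Γ(2β+1))), H_2^β(y) = y² − 1/Γ(β+1), H_4^β(x) = x⁴ − c(β)x² + c(β)/Γ(β+1) − 6/Γ(2β+1), and c(β) = (90Γ(β+1)²Γ(2β+1) − 6Γ(β+1)Γ(3β+1))/(6Γ(β+1)²Γ(3β+1) − Γ(2β+1)Γ(3β+1)). -/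
/-!
Expanding the product, only the mixed moments `M(i, j)` with even `i ≤ 4`, `j ≤ 2` occur, and
the moment formula gives `M(4,2) = 18/Γ(3β+1)`, `M(4,0) = 6/Γ(2β+1)`, `M(2,2) = 2/Γ(2β+1)`,
`M(2,0) = M(0,2) = 1/Γ(β+1)`, `M(0,0) = 1`. What remains is a rational identity in the three
Gamma values.
-/

open MeasureTheory Polynomial Finset

noncomputable def mixedMoment (μ : Measure (ℝ × ℝ)) (m k : ℕ) : ℝ :=
  ∫ p, p.1 ^ m * p.2 ^ k ∂μ

section

variable {μ : Measure (ℝ × ℝ)}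
  (hint : ∀ m k : ℕ, Integrable (fun p : ℝ × ℝ => p.1 ^ m * p.2 ^ k) μ)
include hint

theorem integral_eval_mul_eval {P Q : ℝ[X]} {M K : ℕ} (hP : P.natDegree < M)
    (hQ : Q.natDegree < K) :
    ∫ p, P.eval p.1 * Q.eval p.2 ∂μ =
      ∑ i ∈ range M, ∑ j ∈ range K, P.coeff i * Q.coeff j * mixedMoment μ i j := by
  have hexpand : (fun p : ℝ × ℝ => P.eval p.1 * Q.eval p.2) = fun p =>
      ∑ i ∈ range M, ∑ j ∈ range K, P.coeff i * Q.coeff j * (p.1 ^ i * p.2 ^ j) := by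
    funext p
    rw [eval_eq_sum_range' hP, eval_eq_sum_range' hQ, sum_mul_sum]
    refine sum_congr rfl fun i _ => sum_congr rfl fun j _ => by ring
  rw [hexpand, integral_finsetSum _ fun i _ => integrable_finsetSum _ fun j _ =>
    (hint i j).const_mul _]
  refine sum_congr rfl fun i _ => ?_
  rw [integral_finsetSum _ fun j _ => (hint i j).const_mul _]
  simp only [integral_const_mul, mixedMoment]

theorem integral_quartic_mul_quadratic (c d e : ℝ) :
    ∫ p, (p.1 ^ 4 - c * p.1 ^ 2 + d) * (p.2 ^ 2 - e) ∂μ =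
      mixedMoment μ 4 2 - e * mixedMoment μ 4 0 - c * mixedMoment μ 2 2
        + c * e * mixedMoment μ 2 0 + d * mixedMoment μ 0 2 - d * e * mixedMoment μ 0 0 := by
  have hP : (X ^ 4 - C c * X ^ 2 + C d : ℝ[X]).natDegree < 5 := by compute_degree!
  have hQ : (X ^ 2 - C e : ℝ[X]).natDegree < 3 := by compute_degree!
  have := integral_eval_mul_eval hint hP hQ
  simp only [eval_add, eval_sub, eval_mul, eval_pow, eval_X, eval_C] at this
  rw [this]
  norm_num [sum_range_succ, coeff_X_pow, coeff_C]
  ring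

end

theorem H4_H2_pairing_general (β : ℝ) (hβ : 0 < β)
    (hden1 : 6 * Real.Gamma (β + 1) ^ 2 - Real.Gamma (2 * β + 1) ≠ 0)
    (μ : Measure (ℝ × ℝ))
    (hint : ∀ m k : ℕ, Integrable (fun p : ℝ × ℝ => p.1 ^ m * p.2 ^ k) μ)
    (heven : ∀ n₁ n₂ : ℕ, ∫ p : ℝ × ℝ, p.1 ^ (2 * n₁) * p.2 ^ (2 * n₂) ∂μ =
      ((2 * n₁).factorial * (2 * n₂).factorial * (n₁ + n₂).factorial) /
        (2 ^ (n₁ + n₂) * n₁.factorial * n₂.factorial *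
          Real.Gamma (β * (n₁ + n₂) + 1))) :
    ∫ p : ℝ × ℝ,
        (p.1 ^ 4 -
          (90 * Real.Gamma (β + 1) ^ 2 * Real.Gamma (2 * β + 1) -
              6 * Real.Gamma (β + 1) * Real.Gamma (3 * β + 1)) /
            (6 * Real.Gamma (β + 1) ^ 2 * Real.Gamma (3 * β + 1) -
              Real.Gamma (2 * β + 1) * Real.Gamma (3 * β + 1)) * p.1 ^ 2 +
          (90 * Real.Gamma (β + 1) ^ 2 * Real.Gamma (2 * β + 1) -
              6 * Real.Gamma (β + 1) * Real.Gamma (3 * β + 1)) /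
            (6 * Real.Gamma (β + 1) ^ 2 * Real.Gamma (3 * β + 1) -
              Real.Gamma (2 * β + 1) * Real.Gamma (3 * β + 1)) / Real.Gamma (β + 1) -
          6 / Real.Gamma (2 * β + 1)) *
        (p.2 ^ 2 - 1 / Real.Gamma (β + 1)) ∂μ =
      24 / (Real.Gamma (2 * β + 1) * Real.Gamma (3 * β + 1) *
          (6 * Real.Gamma (β + 1) ^ 2 - Real.Gamma (2 * β + 1))) *
        (3 * Real.Gamma (2 * β + 1) ^ 2 -
          3 * Real.Gamma (β + 1) ^ 2 * Real.Gamma (2 * β + 1) -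
          Real.Gamma (β + 1) * Real.Gamma (3 * β + 1)) := by
  have hΓ₁ : Real.Gamma (β + 1) ≠ 0 := (Real.Gamma_pos_of_pos (by positivity)).ne'
  have hΓ₂ : Real.Gamma (2 * β + 1) ≠ 0 := (Real.Gamma_pos_of_pos (by positivity)).ne'
  have hΓ₃ : Real.Gamma (3 * β + 1) ≠ 0 := (Real.Gamma_pos_of_pos (by positivity)).ne'
  have moment (n₁ n₂ : ℕ) : mixedMoment μ (2 * n₁) (2 * n₂) = _ := heven n₁ n₂
  have m42 := moment 2 1
  have m40 := moment 2 0
  have m22 := moment 1 1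
  have m20 := moment 1 0
  have m02 := moment 0 1
  have m00 := moment 0 0
  norm_num [Nat.factorial, mul_comm β] at m42 m40 m22 m20 m02 m00
  have hcDen : 6 * Real.Gamma (β + 1) ^ 2 * Real.Gamma (3 * β + 1) -
      Real.Gamma (2 * β + 1) * Real.Gamma (3 * β + 1) =
      Real.Gamma (3 * β + 1) * (Real.Gamma (β + 1) ^ 2 * 6 - Real.Gamma (2 * β + 1)) := by ring
  simp_rw [hcDen, add_sub_assoc, integral_quartic_mul_quadratic hint, m42, m40, m22, m20, m02, m00]
  -- `field_simp` rewrites `Γ(β+1)` to `Γ(1+β)` and would no longer see `hden1`; freeze the values.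
  rw [mul_comm 6] at hden1
  generalize Real.Gamma (β + 1) = a at *
  generalize Real.Gamma (2 * β + 1) = b at *
  generalize Real.Gamma (3 * β + 1) = c at *
  field_simp
  ring

/-- Let `μ_β²` be the two-dimensional Mittag-Leffler measure, with mixed moments
`M(2n₁,2n₂) = ((2n₁)!(2n₂)!(n₁+n₂)!)/(2^{n₁+n₂} n₁! n₂! Γ(β(n₁+n₂)+1))` and zero whenever
an exponent is odd. Then `∫ H₄^β(x) H₂^β(y) dμ_β² = A(β)·(3Γ(2β+1)² − 3Γ(β+1)²Γ(2β+1)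
− Γ(β+1)Γ(3β+1))` with `A(β) = 24/(Γ(2β+1)Γ(3β+1)(6Γ(β+1)² − Γ(2β+1)))`, where
`H₂^β(y) = y² − 1/Γ(β+1)`, `H₄^β(x) = x⁴ − c(β)x² + c(β)/Γ(β+1) − 6/Γ(2β+1)` and
`c(β) = (90Γ(β+1)²Γ(2β+1) − 6Γ(β+1)Γ(3β+1))/(6Γ(β+1)²Γ(3β+1) − Γ(2β+1)Γ(3β+1))`. -/
theorem H4_H2_pairing (β : ℝ) (hβ : 0 < β) (hβ1 : β ≤ 1)
    (hden1 : 6 * Real.Gamma (β + 1) ^ 2 - Real.Gamma (2 * β + 1) ≠ 0)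
    (hden2 : 6 * Real.Gamma (β + 1) ^ 2 * Real.Gamma (3 * β + 1) -
      Real.Gamma (2 * β + 1) * Real.Gamma (3 * β + 1) ≠ 0)
    (μ : Measure (ℝ × ℝ)) [IsProbabilityMeasure μ]
    (hint : ∀ m k : ℕ, Integrable (fun p : ℝ × ℝ => p.1 ^ m * p.2 ^ k) μ)
    (heven : ∀ n₁ n₂ : ℕ, ∫ p : ℝ × ℝ, p.1 ^ (2 * n₁) * p.2 ^ (2 * n₂) ∂μ =
      ((2 * n₁).factorial * (2 * n₂).factorial * (n₁ + n₂).factorial) /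
        (2 ^ (n₁ + n₂) * n₁.factorial * n₂.factorial *
          Real.Gamma (β * (n₁ + n₂) + 1)))
    (hodd : ∀ m k : ℕ, Odd m ∨ Odd k →
      ∫ p : ℝ × ℝ, p.1 ^ m * p.2 ^ k ∂μ = 0) :
    ∫ p : ℝ × ℝ,
        (p.1 ^ 4 -
          (90 * Real.Gamma (β + 1) ^ 2 * Real.Gamma (2 * β + 1) -
              6 * Real.Gamma (β + 1) * Real.Gamma (3 * β + 1)) /
            (6 * Real.Gamma (β + 1) ^ 2 * Real.Gamma (3 * β + 1) -
              Real.Gamma (2 * β + 1) * Real.Gamma (3 * β + 1)) * p.1 ^ 2 +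
          (90 * Real.Gamma (β + 1) ^ 2 * Real.Gamma (2 * β + 1) -
              6 * Real.Gamma (β + 1) * Real.Gamma (3 * β + 1)) /
            (6 * Real.Gamma (β + 1) ^ 2 * Real.Gamma (3 * β + 1) -
              Real.Gamma (2 * β + 1) * Real.Gamma (3 * β + 1)) / Real.Gamma (β + 1) -
          6 / Real.Gamma (2 * β + 1)) *
        (p.2 ^ 2 - 1 / Real.Gamma (β + 1)) ∂μ =
      24 / (Real.Gamma (2 * β + 1) * Real.Gamma (3 * β + 1) *
          (6 * Real.Gamma (β + 1) ^ 2 - Real.Gamma (2 * β + 1))) *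
        (3 * Real.Gamma (2 * β + 1) ^ 2 -
          3 * Real.Gamma (β + 1) ^ 2 * Real.Gamma (2 * β + 1) -
          Real.Gamma (β + 1) * Real.Gamma (3 * β + 1)) :=
  H4_H2_pairing_general β hβ hden1 μ hint heven
end

section
/- Let μ be a probability measure on a measurable space Ω and X : Ω → ℝ a measurable function such that, for some c ≥ 0 and β ∈ (0,1], for all n ∈ ℕ we have ∫ X^{2n} dμ = (2n)! c^n / (2^n Γ(βn+1)) and the odd moments vanish, ∫ X^{2n+1} dμ = 0. Then for every λ ∈ ℝ the function e^{λX} is μ-integrable and ∫ e^{λX} dμ = E_β(λ²c/2). -/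
open MeasureTheory

open Real Filter
open scoped ENNReal NNReal

lemma gamma_lower {β s : ℝ} (hβ : 0 < β) (hβ1 : β ≤ 1) (hs : 1 ≤ s) :
    s * Real.Gamma s ≤ Real.Gamma (s + β) * (s + β) ^ (1 - β) := by
  have hs0 : 0 < s := lt_of_lt_of_le one_pos hs
  have hsβ : 0 < s + β := by linarith
  have hlog := Real.convexOn_log_Gamma.2 (Set.mem_Ioi.2 hsβ)
    (Set.mem_Ioi.2 (by linarith : (0:ℝ) < s + β + 1)) hβ.le (by linarith : (0:ℝ) ≤ 1 - β)
    (by ring)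
  have hcomb : β • (s + β) + (1 - β) • (s + β + 1) = s + 1 := by
    simp only [smul_eq_mul]; ring
  rw [hcomb] at hlog
  simp only [Function.comp_apply, smul_eq_mul] at hlog
  have hGadd : Real.Gamma (s + β + 1) = (s + β) * Real.Gamma (s + β) := by
    rw [Real.Gamma_add_one hsβ.ne']
  have hGpos : 0 < Real.Gamma (s + β) := Real.Gamma_pos_of_pos hsβ
  have hGspos : 0 < Real.Gamma (s + 1) := Real.Gamma_pos_of_pos (by linarith)
  rw [hGadd, Real.log_mul hsβ.ne' hGpos.ne'] at hlog
  have h2 : Real.log (Real.Gamma (s + 1)) ≤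
      Real.log (Real.Gamma (s + β)) + (1 - β) * Real.log (s + β) := by nlinarith
  have := Real.exp_le_exp.2 h2
  rw [Real.exp_log hGspos, Real.exp_add, Real.exp_log hGpos] at this
  rw [← Real.Gamma_add_one hs0.ne']
  calc Real.Gamma (s + 1) ≤ Real.Gamma (s + β) * Real.exp ((1 - β) * Real.log (s + β)) := this
    _ = Real.Gamma (s + β) * (s + β) ^ (1 - β) := by
        rw [Real.rpow_def_of_pos hsβ, mul_comm (Real.log (s+β))]

lemma gamma_ratio_bound {β s : ℝ} (hβ : 0 < β) (hβ1 : β ≤ 1) (hs : 1 ≤ s) :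
    Real.Gamma s / Real.Gamma (s + β) ≤ 2 * s ^ (-β) := by
  have hs0 : 0 < s := lt_of_lt_of_le one_pos hs
  have hsβ : 0 < s + β := by linarith
  have hGpos : 0 < Real.Gamma (s + β) := Real.Gamma_pos_of_pos hsβ
  have h1 := gamma_lower hβ hβ1 hs
  have hpow : (s + β) ^ (1 - β) ≤ 2 * s ^ (1 - β) := by
    calc (s + β) ^ (1 - β) ≤ (2 * s) ^ (1 - β) :=
          Real.rpow_le_rpow hsβ.le (by linarith) (by linarith)
      _ = 2 ^ (1 - β) * s ^ (1 - β) := Real.mul_rpow (by norm_num) hs0.le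
      _ ≤ 2 * s ^ (1 - β) := by
          have : (2:ℝ) ^ (1 - β) ≤ 2 ^ (1:ℝ) :=
            Real.rpow_le_rpow_of_exponent_le (by norm_num) (by linarith)
          rw [Real.rpow_one] at this
          exact mul_le_mul_of_nonneg_right this (Real.rpow_nonneg hs0.le _)
  have hkey : s * Real.Gamma s ≤ Real.Gamma (s + β) * (2 * s ^ (1 - β)) := by
    calc s * Real.Gamma s ≤ Real.Gamma (s + β) * (s + β) ^ (1 - β) := h1
      _ ≤ Real.Gamma (s + β) * (2 * s ^ (1 - β)) :=
          mul_le_mul_of_nonneg_left hpow hGpos.le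
  rw [div_le_iff₀ hGpos]
  have h2 : Real.Gamma s ≤ Real.Gamma (s + β) * (2 * s ^ (1 - β)) / s := by
    rw [le_div_iff₀ hs0]
    calc Real.Gamma s * s = s * Real.Gamma s := mul_comm _ _
      _ ≤ _ := hkey
  calc Real.Gamma s ≤ Real.Gamma (s + β) * (2 * s ^ (1 - β)) / s := h2
    _ = 2 * s ^ (-β) * Real.Gamma (s + β) := by
        rw [show (1:ℝ) - β = -β + 1 by ring, Real.rpow_add hs0, Real.rpow_one]
        field_simp

lemma ml_summable {β : ℝ} (hβ : 0 < β) (hβ1 : β ≤ 1) {x : ℝ} (hx : 0 ≤ x) :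
    Summable (fun k : ℕ => x ^ k / Real.Gamma (β * k + 1)) := by
  rcases eq_or_lt_of_le hx with h0 | hx0
  · apply summable_of_ne_finset_zero (s := {0})
    intro k hk
    simp only [Finset.mem_singleton] at hk
    simp [← h0, zero_pow hk]
  · have hΓpos : ∀ k : ℕ, 0 < Real.Gamma (β * k + 1) := fun k =>
      Real.Gamma_pos_of_pos (by positivity)
    have hfpos : ∀ k : ℕ, 0 < x ^ k / Real.Gamma (β * k + 1) := fun k =>
      div_pos (pow_pos hx0 k) (hΓpos k)
    refine summable_of_ratio_test_tendsto_lt_one zero_lt_one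
      (Eventually.of_forall fun n => (hfpos n).ne') ?_
    have hbound : ∀ n : ℕ,
        ‖x ^ (n+1) / Real.Gamma (β * (n+1 : ℕ) + 1)‖ / ‖x ^ n / Real.Gamma (β * n + 1)‖
          ≤ x * (2 * (β * n + 1) ^ (-β)) := by
      intro n
      have hs : (1:ℝ) ≤ β * n + 1 := le_add_of_nonneg_left (by positivity)
      have hgr := gamma_ratio_bound hβ hβ1 hs
      rw [Real.norm_of_nonneg (hfpos _).le, Real.norm_of_nonneg (hfpos n).le]
      have heq : x ^ (n+1) / Real.Gamma (β * (n+1 : ℕ) + 1) / (x ^ n / Real.Gamma (β * n + 1))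
          = x * (Real.Gamma (β * n + 1) / Real.Gamma ((β * n + 1) + β)) := by
        push_cast
        rw [show β * (n + 1) + 1 = β * n + 1 + β by ring]
        have h1 := (hΓpos n).ne'
        have h2 : Real.Gamma (β * n + 1 + β) ≠ 0 :=
          (Real.Gamma_pos_of_pos (by positivity)).ne'
        field_simp
        ring
      rw [heq]
      exact mul_le_mul_of_nonneg_left hgr hx0.le
    apply squeeze_zero (fun n => div_nonneg (norm_nonneg _) (norm_nonneg _)) hbound
    have t1 : Tendsto (fun n : ℕ => β * n + 1) atTop atTop := by
      apply tendsto_atTop_add_const_right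
      exact (tendsto_natCast_atTop_atTop).const_mul_atTop hβ
    have t2 : Tendsto (fun n : ℕ => (β * n + 1) ^ (-β)) atTop (nhds 0) :=
      (tendsto_rpow_neg_atTop hβ).comp t1
    have := (t2.const_mul 2).const_mul x
    simpa using this

set_option maxHeartbeats 2000000 in
/-- Let `μ` be a probability measure and `X` measurable with all moments,
`∫ X^{2n} dμ = (2n)! cⁿ/(2ⁿ Γ(βn+1))` and vanishing odd moments, for some `c ≥ 0`
and `β ∈ (0,1]`. Then for every `λ ∈ ℝ`, `e^{λX}` is `μ`-integrable and
`∫ e^{λX} dμ = E_β(λ²c/2)`. -/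
theorem exp_integrable_and_laplace {Ω : Type*} [MeasurableSpace Ω]
    (μ : Measure Ω) [IsProbabilityMeasure μ] (X : Ω → ℝ) (hX : Measurable X)
    (β c : ℝ) (hβ : 0 < β) (hβ1 : β ≤ 1) (hc : 0 ≤ c)
    (hint : ∀ n : ℕ, Integrable (fun ω => X ω ^ n) μ)
    (heven : ∀ n : ℕ, ∫ ω, X ω ^ (2 * n) ∂μ =
      (2 * n).factorial * c ^ n / (2 ^ n * Real.Gamma (β * n + 1)))
    (hodd : ∀ n : ℕ, ∫ ω, X ω ^ (2 * n + 1) ∂μ = 0) (l : ℝ) :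
    Integrable (fun ω => Real.exp (l * X ω)) μ ∧
    ∫ ω, Real.exp (l * X ω) ∂μ =
      ∑' n : ℕ, (l ^ 2 * c / 2) ^ n / Real.Gamma (β * n + 1) := by
  set F : ℕ → Ω → ℝ := fun n ω => (l * X ω) ^ n / n.factorial with hF
  have hΓpos : ∀ k : ℕ, 0 < Real.Gamma (β * k + 1) := fun k =>
    Real.Gamma_pos_of_pos (by positivity)
  have hFmeas : ∀ n, Measurable (F n) := fun n => ((hX.const_mul l).pow_const n).div_const _
  have hFint : ∀ n, Integrable (F n) μ := by
    intro n
    have h : F n = fun ω => (l ^ n / n.factorial) * X ω ^ n := by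
      funext ω; rw [hF]; simp only [mul_pow]; ring
    rw [h]
    exact (hint n).const_mul _
  set y : ℝ := l ^ 2 * c / 2 with hy
  have hy0 : 0 ≤ y := by positivity
  have hyk : ∀ k : ℕ, y ^ k = l ^ (2 * k) * c ^ k / 2 ^ k := by
    intro k; rw [hy, div_pow, mul_pow, pow_mul]
  have hIG : ∀ k : ℕ, ∫ ω, (l * X ω) ^ (2 * k) ∂μ
      = l ^ (2 * k) * ((2 * k).factorial * c ^ k / (2 ^ k * Real.Gamma (β * k + 1))) := by
    intro k
    simp_rw [mul_pow]
    rw [integral_const_mul, heven k]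
  have hGint : ∀ m : ℕ, Integrable (fun ω => (l * X ω) ^ m) μ := by
    intro m
    simp_rw [mul_pow]
    exact (hint m).const_mul _
  have hEvenNorm : ∀ k : ℕ, (∫ ω, ‖F (2 * k) ω‖ ∂μ) = y ^ k / Real.Gamma (β * k + 1) := by
    intro k
    have h1 : ∀ ω, ‖F (2 * k) ω‖ = (l * X ω) ^ (2 * k) * ((2 * k).factorial : ℝ)⁻¹ := by
      intro ω
      rw [hF, Real.norm_eq_abs, abs_div, abs_of_nonneg ((even_two_mul k).pow_nonneg _),
        abs_of_nonneg (by positivity : (0:ℝ) ≤ ((2 * k).factorial : ℝ)), div_eq_mul_inv]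
    simp_rw [h1]
    rw [integral_mul_const, hIG k, hyk k]
    have hfac : ((2 * k).factorial : ℝ) ≠ 0 := by positivity
    field_simp
  have Sf : Summable (fun k : ℕ => y ^ k / Real.Gamma (β * k + 1)) := ml_summable hβ hβ1 hy0
  have Se : Summable (fun k => ∫ ω, ‖F (2 * k) ω‖ ∂μ) := Sf.congr fun k => (hEvenNorm k).symm
  have hOddNorm : ∀ k : ℕ, (∫ ω, ‖F (2 * k + 1) ω‖ ∂μ)
      ≤ y ^ k / Real.Gamma (β * k + 1)
        + (k + 1 : ℝ) * y ^ (k + 1) / Real.Gamma (β * (k + 1 : ℕ) + 1) := by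
    intro k
    have hpt : ∀ ω, ‖F (2 * k + 1) ω‖ ≤
        ((l * X ω) ^ (2 * k) + (l * X ω) ^ (2 * (k + 1))) / (2 * ((2 * k + 1).factorial : ℝ)) := by
      intro ω
      rw [hF, Real.norm_eq_abs, abs_div, abs_pow,
        abs_of_nonneg (by positivity : (0:ℝ) ≤ ((2 * k + 1).factorial : ℝ))]
      set a := |l * X ω| with ha
      have ha0 : 0 ≤ a := abs_nonneg _
      have e2 : (l * X ω) ^ (2 * k) = a ^ (2 * k) := ((even_two_mul k).pow_abs _).symm
      have e3 : (l * X ω) ^ (2 * (k + 1)) = a ^ (2 * (k + 1)) :=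
        ((even_two_mul (k + 1)).pow_abs _).symm
      rw [e2, e3]
      rw [div_le_div_iff₀ (by positivity) (by positivity)]
      have e4 : a ^ (2 * k + 1) = a ^ (2 * k) * a := pow_succ a (2 * k)
      have e5 : a ^ (2 * (k + 1)) = a ^ (2 * k) * a ^ 2 := by
        rw [show 2 * (k + 1) = 2 * k + 2 by ring, pow_add]
      have key : 2 * a ^ (2 * k + 1) ≤ a ^ (2 * k) + a ^ (2 * (k + 1)) := by
        rw [e4, e5]
        nlinarith [mul_nonneg (pow_nonneg ha0 (2 * k)) (sq_nonneg (a - 1))]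
      have hfacpos : (0:ℝ) < ((2 * k + 1).factorial : ℝ) := by positivity
      nlinarith [mul_le_mul_of_nonneg_right key hfacpos.le]
    have hRint : Integrable
        (fun ω => ((l * X ω) ^ (2 * k) + (l * X ω) ^ (2 * (k + 1))) / (2 * ((2 * k + 1).factorial : ℝ))) μ :=
      ((hGint (2 * k)).add (hGint (2 * (k + 1)))).div_const _
    refine le_trans (integral_mono (hFint (2 * k + 1)).norm hRint hpt) ?_
    rw [integral_div, integral_add (hGint (2 * k)) (hGint (2 * (k + 1))), hIG k, hIG (k + 1)]
    have c1 : ((2 * k + 1).factorial : ℝ) = (2 * k + 1) * (2 * k).factorial := by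
      exact_mod_cast Nat.factorial_succ (2 * k)
    have c2 : ((2 * (k + 1)).factorial : ℝ) = (2 * k + 2) * ((2 * k + 1) * (2 * k).factorial) := by
      rw [show 2 * (k + 1) = (2 * k + 1) + 1 by ring]
      push_cast [Nat.factorial_succ]
      ring
    have heqA : l ^ (2 * k) * ((2 * k).factorial * c ^ k / (2 ^ k * Real.Gamma (β * k + 1)))
        / (2 * ((2 * k + 1).factorial : ℝ))
        = y ^ k / Real.Gamma (β * k + 1) * (1 / (2 * (2 * k + 1))) := by
      rw [hyk k, c1]
      have h1 := (hΓpos k).ne'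
      have h2 : ((2 * k).factorial : ℝ) ≠ 0 := by positivity
      have h3 : (2 * (k:ℝ) + 1) ≠ 0 := by positivity
      field_simp
    have heqB : l ^ (2 * (k + 1)) * ((2 * (k + 1)).factorial * c ^ (k + 1)
          / (2 ^ (k + 1) * Real.Gamma (β * (k + 1 : ℕ) + 1)))
        / (2 * ((2 * k + 1).factorial : ℝ))
        = (k + 1 : ℝ) * y ^ (k + 1) / Real.Gamma (β * (k + 1 : ℕ) + 1) := by
      rw [hyk (k + 1), c2, c1]
      have h1 := (hΓpos (k + 1)).ne'
      have h2 : ((2 * k).factorial : ℝ) ≠ 0 := by positivity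
      have h3 : (2 * (k:ℝ) + 1) ≠ 0 := by positivity
      push_cast
      field_simp
    rw [add_div, heqA, heqB]
    have hle : y ^ k / Real.Gamma (β * k + 1) * (1 / (2 * (2 * k + 1)))
        ≤ y ^ k / Real.Gamma (β * k + 1) := by
      have h0 : 0 ≤ y ^ k / Real.Gamma (β * k + 1) := by positivity
      have h4 : 1 / (2 * ((2:ℝ) * k + 1)) ≤ 1 := by
        rw [div_le_one (by positivity)]
        nlinarith [Nat.cast_nonneg (α := ℝ) k]
      calc y ^ k / Real.Gamma (β * k + 1) * (1 / (2 * (2 * k + 1)))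
          ≤ y ^ k / Real.Gamma (β * k + 1) * 1 := by
            exact mul_le_mul_of_nonneg_left h4 h0
        _ = _ := mul_one _
    exact add_le_add hle le_rfl
  have Sg : Summable (fun k : ℕ => (2 * y) ^ (k + 1) / Real.Gamma (β * (k + 1 : ℕ) + 1)) :=
    (summable_nat_add_iff 1).2 (ml_summable hβ hβ1 (by linarith : (0:ℝ) ≤ 2 * y))
  have S2 : Summable (fun k : ℕ => (k + 1 : ℝ) * y ^ (k + 1) / Real.Gamma (β * (k + 1 : ℕ) + 1)) := by
    apply Summable.of_nonneg_of_le (fun k => by positivity) _ Sg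
    intro k
    have hnum : (k + 1 : ℝ) * y ^ (k + 1) ≤ (2 * y) ^ (k + 1) := by
      rw [mul_pow]
      have h1 : (k + 1 : ℝ) ≤ 2 ^ (k + 1) := by exact_mod_cast (Nat.lt_two_pow_self (n := k + 1)).le
      exact mul_le_mul_of_nonneg_right h1 (pow_nonneg hy0 _)
    exact div_le_div_of_nonneg_right hnum (hΓpos (k+1)).le
  have So : Summable (fun k => ∫ ω, ‖F (2 * k + 1) ω‖ ∂μ) :=
    Summable.of_nonneg_of_le (fun k => integral_nonneg fun ω => norm_nonneg _) hOddNorm (Sf.add S2)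
  have Snorm : Summable (fun n => ∫ ω, ‖F n ω‖ ∂μ) := Summable.even_add_odd Se So
  have hexp : ∀ ω, Real.exp (l * X ω) = ∑' n, F n ω := by
    intro ω
    rw [Real.exp_eq_exp_ℝ, NormedSpace.exp_eq_tsum_div]
  have hptsummable : ∀ ω, Summable fun n => ‖F n ω‖ := by
    intro ω
    apply (Real.summable_pow_div_factorial |l * X ω|).congr
    intro n
    rw [hF]
    simp [abs_div, abs_pow, abs_mul, Nat.abs_cast]
  have hInt : Integrable (fun ω => Real.exp (l * X ω)) μ := by
    constructor
    · exact (Real.measurable_exp.comp (hX.const_mul l)).aestronglyMeasurable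
    · show ∫⁻ ω, ‖Real.exp (l * X ω)‖₊ ∂μ < ⊤
      have hnnsum : ∀ ω, Summable fun n => ‖F n ω‖₊ := by
        intro ω
        rw [← NNReal.summable_coe]
        simpa [coe_nnnorm] using hptsummable ω
      calc ∫⁻ ω, (‖Real.exp (l * X ω)‖₊ : ℝ≥0∞) ∂μ
          ≤ ∫⁻ ω, ∑' n, (‖F n ω‖₊ : ℝ≥0∞) ∂μ := by
            apply lintegral_mono
            intro ω
            dsimp only
            rw [hexp ω, ← ENNReal.coe_tsum (hnnsum ω)]
            exact ENNReal.coe_le_coe.2 (nnnorm_tsum_le (hnnsum ω))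
        _ = ∑' n, ∫⁻ ω, (‖F n ω‖₊ : ℝ≥0∞) ∂μ :=
            lintegral_tsum fun n => ((hFmeas n).nnnorm.coe_nnreal_ennreal).aemeasurable
        _ = ∑' n, ENNReal.ofReal (∫ ω, ‖F n ω‖ ∂μ) := by
            congr 1
            funext n
            exact (ofReal_integral_norm_eq_lintegral_enorm (hFint n)).symm
        _ = ENNReal.ofReal (∑' n, ∫ ω, ‖F n ω‖ ∂μ) :=
            (ENNReal.ofReal_tsum_of_nonneg (fun n => integral_nonneg fun ω => norm_nonneg _)
              Snorm).symm
        _ < ⊤ := ENNReal.ofReal_lt_top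
  refine ⟨hInt, ?_⟩
  have h1 : ∫ ω, Real.exp (l * X ω) ∂μ = ∑' n, ∫ ω, F n ω ∂μ := by
    simp_rw [hexp]
    exact (integral_tsum_of_summable_integral_norm hFint Snorm).symm
  have hIeven : ∀ k : ℕ, ∫ ω, F (2 * k) ω ∂μ = y ^ k / Real.Gamma (β * k + 1) := by
    intro k
    rw [← hEvenNorm k]
    apply integral_congr_ae
    filter_upwards with ω
    rw [Real.norm_of_nonneg]
    rw [hF]
    exact div_nonneg ((even_two_mul k).pow_nonneg _) (by positivity)
  have hIodd : ∀ k : ℕ, ∫ ω, F (2 * k + 1) ω ∂μ = 0 := by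
    intro k
    have h : F (2 * k + 1) = fun ω => (l ^ (2 * k + 1) / ((2 * k + 1).factorial : ℝ)) * X ω ^ (2 * k + 1) := by
      funext ω; rw [hF]; simp only [mul_pow]; ring
    rw [h, integral_const_mul, hodd k, mul_zero]
  have Seint : Summable (fun k => ∫ ω, F (2 * k) ω ∂μ) := Sf.congr fun k => (hIeven k).symm
  have Soint : Summable (fun k => ∫ ω, F (2 * k + 1) ω ∂μ) :=
    summable_zero.congr fun k => (hIodd k).symm
  rw [h1, ← tsum_even_add_odd Seint Soint]
  simp_rw [hIeven, hIodd]
  rw [tsum_zero, add_zero]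
end

section
/- For β ∈ (0,1] and the M-Wright function M_β(z) = Σ_{n≥0} (−z)^n/(n! Γ(−βn + 1 − β)), one has, for β = 1/2, M_{1/2}(z) = (1/√π)·exp(−z²/4) for all real z. -/
/-!
Since `Γ` has poles at the non-positive integers, the odd terms of the series (where the argument
of `Γ` is `-k`) vanish. At the even index `2k` the argument is `1/2 - k`, and
`Γ(1/2 - k) = (-4)ᵏ k! √π / (2k)!`, so the even terms are `(-z²/4)ᵏ / (k! √π)`: the series of
`exp(-z²/4) / √π`.
-/

open Real

theorem Real.Gamma_one_half_sub_nat (k : ℕ) :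
    Gamma (1 / 2 - k) = (-4) ^ k * k.factorial / (2 * k).factorial * √π := by
  induction k with
  | zero => simpa using Gamma_one_half_eq
  | succ k ih =>
    have hne : (1 / 2 - (k + 1 : ℝ)) ≠ 0 := by linarith [k.cast_nonneg (α := ℝ)]
    have hrec : Gamma (1 / 2 - (k + 1 : ℝ)) = Gamma (1 / 2 - k) / (1 / 2 - (k + 1)) := by
      rw [eq_div_iff hne, mul_comm, ← Gamma_add_one hne]
      ring_nf
    rw [show 2 * (k + 1) = 2 * k + 1 + 1 by ring]
    push_cast [Nat.factorial_succ]
    rw [hrec, ih, show (1 / 2 - (k + 1 : ℝ)) = -(2 * k + 1) / 2 by ring]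
    field_simp
    ring

theorem tsum_eq_tsum_even_of_odd_eq_zero {α : Type*} [AddCommMonoid α] [TopologicalSpace α]
    {f : ℕ → α} (hf : ∀ k, f (2 * k + 1) = 0) : ∑' n, f n = ∑' k, f (2 * k) := by
  refine ((mul_right_injective₀ two_ne_zero).tsum_eq fun n hn => ?_).symm
  obtain ⟨k, rfl | rfl⟩ := n.even_or_odd'
  · exact ⟨k, rfl⟩
  · exact absurd (hf k) hn

theorem mWright_half_term_odd (z : ℝ) (k : ℕ) :
    (-z) ^ (2 * k + 1) /
      ((2 * k + 1).factorial * Gamma (-(1 / 2) * ↑(2 * k + 1) + 1 - 1 / 2)) = 0 := by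
  rw [show -(1 / 2) * ((2 * k + 1 : ℕ) : ℝ) + 1 - 1 / 2 = -k by push_cast; ring,
    Gamma_neg_nat_eq_zero, mul_zero, div_zero]

theorem mWright_half_term_even (z : ℝ) (k : ℕ) :
    (-z) ^ (2 * k) / ((2 * k).factorial * Gamma (-(1 / 2) * ↑(2 * k) + 1 - 1 / 2)) =
      1 / √π * ((-z ^ 2 / 4) ^ k / k.factorial) := by
  rw [show -(1 / 2) * ((2 * k : ℕ) : ℝ) + 1 - 1 / 2 = 1 / 2 - k by push_cast; ring,
    Gamma_one_half_sub_nat, pow_mul, neg_sq, neg_div, ← div_neg, div_pow]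
  field_simp

/-- The M-Wright function for `β = 1/2`:
`M_{1/2}(z) = (1/√π)·exp(−z²/4)` for all real `z`, where
`M_β(z) = ∑ (−z)ⁿ/(n! Γ(−βn + 1 − β))` (with `1/Γ = 0` at the poles of `Γ`). -/
theorem mWright_half (z : ℝ) :
    (∑' n : ℕ, (-z) ^ n / (n.factorial * Real.Gamma (-(1 / 2) * n + 1 - 1 / 2))) =
      (1 / Real.sqrt Real.pi) * Real.exp (-z ^ 2 / 4) := by
  rw [tsum_eq_tsum_even_of_odd_eq_zero (mWright_half_term_odd z)]
  simp_rw [mWright_half_term_even]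
  rw [tsum_mul_left, exp_eq_exp_ℝ, (NormedSpace.expSeries_div_hasSum_exp _).tsum_eq]
end

section
/- Let ν be a probability measure on (0,∞), let η ∈ ℝ^d with η ≠ 0, φ ∈ ℂ^d with |φ| < M for some M < ∞, and set z(x) = (1/2)x²⟨η,η⟩ + (1/2)⟨φ,φ⟩ + x⟨η,φ⟩ (bilinear extension of the real inner product to ℂ^d, no conjugation). Then ∫_ℝ |∫_0^∞ e^{−r z(x)} dν(r)| dx ≤ √(2π/⟨η,η⟩) ∫_0^∞ r^{−1/2} e^{M² r/2} dν(r), provided the right-hand side is finite. -/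
/-!
For each `r > 0` the modulus `|e^{-r z(x)}| = e^{-r Re z(x)}` is a real Gaussian in `x`, so after
moving the absolute value inside the `ν`-integral and exchanging the two integrals (Tonelli), the
`x`-integral can be computed exactly by completing the square:
`∫ e^{-r Re z(x)} dx = √(2π/(r⟨η,η⟩)) · exp (r/2 · (⟨η,φ₁⟩²/⟨η,η⟩ - |φ₁|² + |φ₂|²))`.
By Cauchy–Schwarz the exponent is at most `r|φ₂|²/2 < rM²/2`.
-/

open MeasureTheory
open scoped RealInnerProductSpace

theorem lintegral_enorm_integral_le_lintegral_lintegral_enorm {α β E : Type*}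
    [MeasurableSpace α] [MeasurableSpace β] [NormedAddCommGroup E] [NormedSpace ℝ E]
    {μ : Measure α} {ν : Measure β} [SFinite μ] [SFinite ν] {f : α → β → E}
    (hf : AEStronglyMeasurable (Function.uncurry f) (μ.prod ν)) :
    ∫⁻ x, ‖∫ y, f x y ∂ν‖ₑ ∂μ ≤ ∫⁻ y, ∫⁻ x, ‖f x y‖ₑ ∂μ ∂ν :=
  calc ∫⁻ x, ‖∫ y, f x y ∂ν‖ₑ ∂μ ≤ ∫⁻ x, ∫⁻ y, ‖f x y‖ₑ ∂ν ∂μ :=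
        lintegral_mono fun _ => enorm_integral_le_lintegral_enorm _
    _ = ∫⁻ y, ∫⁻ x, ‖f x y‖ₑ ∂μ ∂ν := lintegral_lintegral_swap hf.enorm

theorem sq_inner_div_inner_self_le_norm_sq {F : Type*} [NormedAddCommGroup F]
    [InnerProductSpace ℝ F] (x y : F) : ⟪x, y⟫ ^ 2 / ⟪x, x⟫ ≤ ‖y‖ ^ 2 := by
  rcases eq_or_ne x 0 with rfl | hx
  · simp
  rw [div_le_iff₀ (real_inner_self_pos.2 hx), ← real_inner_self_eq_norm_sq, sq, mul_comm ⟪y, y⟫]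
  exact real_inner_mul_inner_self_le x y

theorem lintegral_ofReal_exp_quadratic {p : ℝ} (hp : 0 < p) (q s : ℝ) :
    ∫⁻ x : ℝ, ENNReal.ofReal (Real.exp (-p * x ^ 2 + q * x + s)) =
      ENNReal.ofReal (Real.sqrt (Real.pi / p) * Real.exp (q ^ 2 / (4 * p) + s)) := by
  have hsquare (x : ℝ) : Real.exp (-p * x ^ 2 + q * x + s) =
      Real.exp (-p * (x - q / (2 * p)) ^ 2) * Real.exp (q ^ 2 / (4 * p) + s) := by
    rw [← Real.exp_add]
    congr 1
    field_simp
    ring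
  have hint : Integrable fun x : ℝ => Real.exp (-p * x ^ 2 + q * x + s) := by
    simp_rw [hsquare]
    exact ((integrable_exp_neg_mul_sq hp).comp_sub_right _).mul_const _
  rw [← ofReal_integral_eq_lintegral_ofReal hint (.of_forall fun _ => (Real.exp_pos _).le)]
  simp_rw [hsquare, integral_mul_const]
  rw [integral_sub_right_eq_self (fun x => Real.exp (-p * x ^ 2)), integral_gaussian]

theorem lintegral_ofReal_exp_neg_mul_quadratic {a r : ℝ} (ha : 0 < a) (hr : 0 < r) (b c : ℝ) :
    ∫⁻ x : ℝ, ENNReal.ofReal (Real.exp (-(r * (x ^ 2 * a / 2 + b / 2 + x * c)))) =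
      ENNReal.ofReal (Real.sqrt (2 * Real.pi / a) *
        (r ^ (-(1 / 2) : ℝ) * Real.exp (r * (c ^ 2 / a - b) / 2))) := by
  have hp : 0 < r * a / 2 := by positivity
  have hexp (x : ℝ) : -(r * (x ^ 2 * a / 2 + b / 2 + x * c)) =
      -(r * a / 2) * x ^ 2 + -(r * c) * x + -(r * b / 2) := by ring
  have hsqrt :
      Real.sqrt (Real.pi / (r * a / 2)) = Real.sqrt (2 * Real.pi / a) * r ^ (-(1 / 2) : ℝ) := by
    rw [show Real.pi / (r * a / 2) = 2 * Real.pi / a * r⁻¹ by field_simp,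
      Real.sqrt_mul (by positivity), Real.sqrt_inv, Real.rpow_neg hr.le, ← Real.sqrt_eq_rpow]
  have hmax : (-(r * c)) ^ 2 / (4 * (r * a / 2)) + -(r * b / 2) = r * (c ^ 2 / a - b) / 2 := by
    field_simp
    ring
  simp_rw [hexp]
  rw [lintegral_ofReal_exp_quadratic hp, hsqrt, hmax, mul_assoc]

theorem enorm_cexp_neg_ofReal_mul (r : ℝ) (w : ℂ) :
    ‖Complex.exp (-(r : ℂ) * w)‖ₑ = ENNReal.ofReal (Real.exp (-(r * w.re))) := by
  rw [← ofReal_norm, Complex.norm_exp, ← Complex.ofReal_neg, Complex.re_ofReal_mul,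
    neg_mul]

theorem re_ofReal_add_div_two_add_mul (u b t c t' x : ℝ) :
    ((u : ℂ) + ((b : ℂ) + 2 * t * Complex.I) / 2 + x * ((c : ℂ) + t' * Complex.I)).re =
      u + b / 2 + x * c := by
  simp

/-- Let `ν` be a probability measure on `(0,∞)`, `η ∈ ℝ^d` nonzero, `φ = φ₁ + iφ₂ ∈ ℂ^d`
with `|φ| < M`, and `z(x) = (1/2)x²⟨η,η⟩ + (1/2)⟨φ,φ⟩ + x⟨η,φ⟩` (bilinear extension of
the inner product). Then
`∫_ℝ |∫₀^∞ e^{−r z(x)} dν(r)| dx ≤ √(2π/⟨η,η⟩) ∫₀^∞ r^{−1/2} e^{M²r/2} dν(r)`,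
provided the right-hand side is finite. -/
theorem donsker_delta_bound {d : ℕ} (ν : Measure ℝ) [IsProbabilityMeasure ν]
    (hν : ν (Set.Iic 0) = 0)
    (η φ₁ φ₂ : EuclideanSpace ℝ (Fin d)) (hη : η ≠ 0)
    (M : ℝ) (hM : Real.sqrt (‖φ₁‖ ^ 2 + ‖φ₂‖ ^ 2) < M)
    (hfin : Integrable (fun r : ℝ => r ^ (-(1 / 2) : ℝ) * Real.exp (M ^ 2 * r / 2)) ν) :
    (∫⁻ x : ℝ, ENNReal.ofReal
        ‖∫ r, Complex.exp (-(r : ℂ) *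
            ((x ^ 2 * ⟪η, η⟫ / 2 : ℝ) +
              (((‖φ₁‖ ^ 2 - ‖φ₂‖ ^ 2 : ℝ) : ℂ) + 2 * (⟪φ₁, φ₂⟫ : ℝ) * Complex.I) / 2 +
              (x : ℂ) * (((⟪η, φ₁⟫ : ℝ) : ℂ) + ((⟪η, φ₂⟫ : ℝ) : ℂ) * Complex.I))) ∂ν‖) ≤
      ENNReal.ofReal (Real.sqrt (2 * Real.pi / ⟪η, η⟫) *
        ∫ r, r ^ (-(1 / 2) : ℝ) * Real.exp (M ^ 2 * r / 2) ∂ν) := by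
  have ha : 0 < ⟪η, η⟫ := real_inner_self_pos.2 hη
  have hexponent : ⟪η, φ₁⟫ ^ 2 / ⟪η, η⟫ - (‖φ₁‖ ^ 2 - ‖φ₂‖ ^ 2) ≤ M ^ 2 := by
    have hcs := sq_inner_div_inner_self_le_norm_sq η φ₁
    have hM2 := (Real.sqrt_lt' ((Real.sqrt_nonneg _).trans_lt hM)).1 hM
    linarith [sq_nonneg ‖φ₁‖]
  have hpos : ∀ᵐ r ∂ν, 0 < r := ae_iff.2 (by simp only [not_lt]; exact hν)
  simp_rw [ofReal_norm]
  rw [← integral_const_mul, ofReal_integral_eq_lintegral_ofReal (hfin.const_mul _)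
    (hpos.mono fun r hr => by positivity)]
  refine (lintegral_enorm_integral_le_lintegral_lintegral_enorm ?_).trans (lintegral_mono_ae ?_)
  · exact Continuous.aestronglyMeasurable (by fun_prop)
  filter_upwards [hpos] with r hr
  simp_rw [enorm_cexp_neg_ofReal_mul, re_ofReal_add_div_two_add_mul,
    lintegral_ofReal_exp_neg_mul_quadratic ha hr, mul_comm (M ^ 2) r]
  gcongr
end
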